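/- arXiv:2602.04767 — 6 statements merged into one kernel-verified Lean document; each statement's English description precedes it below -/
import Mathlib

section
/- For any permutation π and integers d₁ < d₂ ≤ des(π), we have ls_{d₁}(π) < ls_{d₂}(π). -/
open List Finset

variable {α : Type*}

/-- The (1-based) descent set of a finite sequence, as a `Finset ℕ`. -/
def desSet [LinearOrder α] [Inhabited α] (l : List α) : Finset ℕ :=
  (Finset.Icc 1 (l.length - 1)).filter (fun i => l.getD i default < l.getD (i - 1) default)

/-- The number of descents of a finite sequence. -/
def desNum [LinearOrder α] [Inhabited α] (l : List α) : ℕ := (desSet l).card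

/-- The number of ascents of a finite sequence. -/
def ascNum [LinearOrder α] [Inhabited α] (l : List α) : ℕ :=
  ((Finset.Icc 1 (l.length - 1)).filter (fun i => l.getD (i - 1) default < l.getD i default)).card

/-- `lsd w d` : the maximum length of a subsequence of `w` with exactly `d` descents
(`0` if there is none). -/
noncomputable def lsd [LinearOrder α] [Inhabited α] (w : List α) (d : ℕ) : ℕ :=
  sSup {m | ∃ s : List α, s.Sublist w ∧ desNum s = d ∧ s.length = m}

/-- `lsD w D` : the maximum length of a subsequence of `w` whose descent set is exactly `D`
(`0` if there is none). -/
noncomputable def lsD [LinearOrder α] [Inhabited α] (w : List α) (D : Finset ℕ) : ℕ :=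
  sSup {m | ∃ s : List α, s.Sublist w ∧ desSet s = D ∧ s.length = m}

/-- The length of a longest (strictly) increasing subsequence. -/
noncomputable def lis [LinearOrder α] (w : List α) : ℕ :=
  sSup {m | ∃ s : List α, s.Sublist w ∧ s.Pairwise (· < ·) ∧ s.length = m}

/-- The length of a longest (strictly) decreasing subsequence. -/
noncomputable def lds [LinearOrder α] (w : List α) : ℕ :=
  sSup {m | ∃ s : List α, s.Sublist w ∧ s.Pairwise (· > ·) ∧ s.length = m}

/-- The one-line notation word of a permutation of `Fin n` (with values in `ℕ`). -/
def word {n : ℕ} (π : Equiv.Perm (Fin n)) : List ℕ := List.ofFn (fun i => (π i : ℕ))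

/-- The factor `w_{[a, b]}` of a word `w` (positions `a` through `b`, 1-based). -/
def factor (w : List α) (a b : ℕ) : List α := (w.drop (a - 1)).take (b - a + 1)

/-!
Let `d < des w` and let `s` be a longest subsequence of `w` with `d` descents (one exists,
since deleting the first entry of a sequence lowers its number of descents by at most one).
Then `s ≠ w`, so some entry of `w` can be added to `s`; the result has `d` or `d + 1` descents,
and `d` is excluded by the maximality of `s`. Hence `ls_d w < ls_{d+1} w` for every `d < des w`.
-/

lemma List.Sublist.exists_append_cons_sublist {s w : List α} (h : s <+ w)
    (hlt : s.length < w.length) : ∃ l₁ x l₂, s = l₁ ++ l₂ ∧ l₁ ++ x :: l₂ <+ w := by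
  induction h with
  | slnil => simp at hlt
  | @cons s w a h ih =>
    by_cases hsw : s.length < w.length
    · obtain ⟨l₁, x, l₂, rfl, h'⟩ := ih hsw
      exact ⟨l₁, x, l₂, rfl, h'.cons a⟩
    · obtain rfl := h.eq_of_length (by simpa using h.length_le.antisymm (not_lt.1 hsw))
      exact ⟨[], a, s, rfl, .refl _⟩
  | @cons_cons s w a h ih =>
    obtain ⟨l₁, x, l₂, rfl, h'⟩ := ih (by simpa using hlt)
    exact ⟨a :: l₁, x, l₂, rfl, h'.cons_cons a⟩

section Descents

variable [LinearOrder α] [Inhabited α]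

lemma desNum_eq_sum (l : List α) :
    desNum l = ∑ i ∈ range (l.length - 1),
      if l.getD (i + 1) default < l.getD i default then 1 else 0 := by
  rw [desNum, desSet, card_filter, ← Ico_add_one_right_eq_Icc, sum_Ico_eq_sum_range]
  simp only [Nat.add_sub_cancel, Nat.add_comm 1, Nat.add_sub_cancel]

@[simp]
lemma desNum_nil : desNum ([] : List α) = 0 := by
  simp [desNum_eq_sum]

@[simp]
lemma desNum_singleton (a : α) : desNum [a] = 0 := by
  simp [desNum_eq_sum]

lemma desNum_cons_cons (a b : α) (l : List α) :
    desNum (a :: b :: l) = (if b < a then 1 else 0) + desNum (b :: l) := by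
  simp only [desNum_eq_sum, length_cons, Nat.add_sub_cancel, Finset.sum_range_succ' _ l.length,
    getD_cons_succ, getD_cons_zero]
  omega

lemma desNum_append_cons_mem : ∀ (l₁ : List α) (x : α) (l₂ : List α),
    desNum (l₁ ++ x :: l₂) ∈ Set.Icc (desNum (l₁ ++ l₂)) (desNum (l₁ ++ l₂) + 1)
  | [], _, [] => by simp
  | [], x, b :: l => by
    rw [nil_append, nil_append, desNum_cons_cons, Set.mem_Icc]
    split_ifs <;> omega
  | [a], x, [] => by
    simp only [cons_append, nil_append, desNum_cons_cons]
    split_ifs <;> simp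
  | [a], x, b :: l => by
    simp only [cons_append, nil_append, desNum_cons_cons, Set.mem_Icc]
    split_ifs <;> first | omega | order
  | a :: c :: l₁, x, l₂ => by
    have ih := desNum_append_cons_mem (c :: l₁) x l₂
    simp only [cons_append, desNum_cons_cons, Set.mem_Icc] at ih ⊢
    omega

lemma exists_sublist_desNum_eq {w : List α} {d : ℕ} (hd : d ≤ desNum w) :
    ∃ s, s <+ w ∧ desNum s = d := by
  induction w with
  | nil => exact ⟨[], .slnil, by rw [desNum_nil] at hd ⊢; omega⟩
  | cons a t ih =>
    obtain rfl | hlt := hd.eq_or_lt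
    · exact ⟨a :: t, .refl _, rfl⟩
    · have hcons := (desNum_append_cons_mem [] a t).2
      obtain ⟨s, hs, rfl⟩ := ih (by simp only [nil_append] at hcons; omega)
      exact ⟨s, hs.cons a, rfl⟩

lemma bddAbove_lengths_sublist_desNum_eq (w : List α) (d : ℕ) :
    BddAbove {m | ∃ s : List α, s.Sublist w ∧ desNum s = d ∧ s.length = m} :=
  ⟨w.length, fun _ ⟨_, hs, _, hm⟩ => hm ▸ hs.length_le⟩

lemma length_le_lsd {s w : List α} (hs : s <+ w) : s.length ≤ lsd w (desNum s) :=
  le_csSup (bddAbove_lengths_sublist_desNum_eq w _) ⟨s, hs, rfl, rfl⟩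

lemma exists_sublist_length_eq_lsd {w : List α} {d : ℕ} (hd : d ≤ desNum w) :
    ∃ s, s <+ w ∧ desNum s = d ∧ s.length = lsd w d := by
  obtain ⟨s, hs, hsd⟩ := exists_sublist_desNum_eq hd
  exact Nat.sSup_mem (s := {m | ∃ s : List α, s <+ w ∧ desNum s = d ∧ s.length = m})
    ⟨s.length, s, hs, hsd, rfl⟩ (bddAbove_lengths_sublist_desNum_eq w d)

lemma lsd_lt_lsd_succ {w : List α} {d : ℕ} (hd : d + 1 ≤ desNum w) :
    lsd w d < lsd w (d + 1) := by
  obtain ⟨s, hs, hsd, hlen⟩ := exists_sublist_length_eq_lsd (Nat.le_of_succ_le hd)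
  have hproper : s.length < w.length :=
    hs.length_le.lt_of_ne fun h => by rw [hs.eq_of_length h] at hsd; omega
  obtain ⟨l₁, x, l₂, rfl, hsub⟩ := hs.exists_append_cons_sublist hproper
  have hmem := desNum_append_cons_mem l₁ x l₂
  have hlong := length_le_lsd hsub
  rw [Set.mem_Icc, hsd] at hmem
  simp only [length_append, length_cons] at hlen hlong
  obtain hdes | hdes : desNum (l₁ ++ x :: l₂) = d ∨ desNum (l₁ ++ x :: l₂) = d + 1 := by omega
  · rw [hdes] at hlong; omega
  · rw [hdes] at hlong; omega

theorem strictMonoOn_lsd (w : List α) : StrictMonoOn (lsd w) (Set.Iic (desNum w)) :=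
  strictMonoOn_Iic_of_lt_succ fun _ hm => by
    rw [Order.succ_eq_add_one]; exact lsd_lt_lsd_succ hm

end Descents

theorem stmt2 (n : ℕ) (π : Equiv.Perm (Fin n)) (d₁ d₂ : ℕ) (h12 : d₁ < d₂)
    (h2 : d₂ ≤ desNum (word π)) : lsd (word π) d₁ < lsd (word π) d₂ :=
  strictMonoOn_lsd (word π) (h12.le.trans h2) h2 h12
end

section
/- For any permutation π and any d with 0 ≤ d ≤ des(π), ls_d(π) ≤ asc(π) + d + 1, where asc(π) is the number of ascents of π. -/
open List Finset

variable {α : Type*}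

/-! Ascents and descents are both counted by `List.adjCount`, the number of adjacent pairs of a
list related by `r`: ascents for `r = (· < ·)`, descents for `r = (· > ·)`. Deleting letters
never creates new ascents, so the subsequence `s` has at most `asc w` ascents; on the other hand,
every adjacent pair of `s` is an ascent or a descent, so `|s| - 1 = asc s + des s ≤ asc w + d`. -/

namespace List

def adjCount (r : α → α → Prop) [DecidableRel r] : List α → ℕ
  | a :: b :: t => (if r a b then 1 else 0) + adjCount r (b :: t)
  | _ => 0

section adjCount

variable (r : α → α → Prop) [DecidableRel r]

@[simp]
lemma adjCount_cons_cons (a b : α) (t : List α) :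
    adjCount r (a :: b :: t) = (if r a b then 1 else 0) + adjCount r (b :: t) := rfl

lemma adjCount_le_adjCount_cons (x : α) (l : List α) : adjCount r l ≤ adjCount r (x :: l) := by
  cases l <;> simp [adjCount]

variable {r} [IsOrderConnected α r]

lemma adjCount_cons_le_adjCount_cons_cons (x a : α) (l : List α) :
    adjCount r (x :: l) ≤ adjCount r (x :: a :: l) := by
  cases l with
  | nil => simp [adjCount]
  | cons c t =>
    -- an `r`-pair `(x, c)` forces an `r`-pair `(x, a)` or `(a, c)`
    have := IsOrderConnected.conn (lt := r) x a c
    simp only [adjCount_cons_cons]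
    split_ifs <;> simp_all; omega

lemma Sublist.adjCount_cons_le {s w : List α} (h : s <+ w) (x : α) :
    adjCount r (x :: s) ≤ adjCount r (x :: w) := by
  induction h generalizing x with
  | slnil => rfl
  | cons a _ ih => exact (ih x).trans (adjCount_cons_le_adjCount_cons_cons x a _)
  | cons_cons a _ ih => simpa using ih a

lemma Sublist.adjCount_le {s w : List α} (h : s <+ w) : adjCount r s ≤ adjCount r w := by
  induction h with
  | slnil => rfl
  | cons a _ ih => exact ih.trans (adjCount_le_adjCount_cons r a _)
  | cons_cons a h _ => exact h.adjCount_cons_le a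

end adjCount

lemma Nodup.adjCount_lt_add_adjCount_gt [LinearOrder α] :
    ∀ {l : List α}, l.Nodup → adjCount (· < ·) l + adjCount (· > ·) l = l.length - 1
  | [], _ | [_], _ => rfl
  | a :: b :: t, h => by
    have ih := h.of_cons.adjCount_lt_add_adjCount_gt
    rw [length_cons] at ih
    have hab : a ≠ b := by simp_all
    rcases hab.lt_or_gt with hab | hab <;>
      simp only [adjCount_cons_cons, hab, hab.not_gt, if_true, if_false, length_cons] <;> omega

end List

section

variable [Inhabited α] (r : α → α → Prop) [DecidableRel r]

lemma card_filter_range_getD_eq_adjCount : ∀ l : List α,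
    #{j ∈ range (l.length - 1) | r (l.getD j default) (l.getD (j + 1) default)} = adjCount r l
  | [] | [_] => rfl
  | a :: b :: t => by
    have ih := card_filter_range_getD_eq_adjCount (b :: t)
    rw [card_filter] at ih ⊢
    simp only [length_cons, Nat.add_sub_cancel, getD_cons_succ] at ih ⊢
    rw [Finset.sum_range_succ', add_comm, adjCount_cons_cons, ← ih]
    simp only [getD_cons_succ, getD_cons_zero]

lemma card_filter_Icc_getD_eq_adjCount (l : List α) :
    #{i ∈ Icc 1 (l.length - 1) | r (l.getD (i - 1) default) (l.getD i default)} = adjCount r l := by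
  rw [← card_filter_range_getD_eq_adjCount, card_filter, card_filter,
    ← Ico_add_one_right_eq_Icc, sum_Ico_eq_sum_range]
  simp only [Nat.add_sub_cancel, add_comm 1]

end

lemma ascNum_eq_adjCount [LinearOrder α] [Inhabited α] (l : List α) :
    ascNum l = adjCount (· < ·) l :=
  card_filter_Icc_getD_eq_adjCount (· < ·) l

lemma desNum_eq_adjCount [LinearOrder α] [Inhabited α] (l : List α) :
    desNum l = adjCount (· > ·) l :=
  card_filter_Icc_getD_eq_adjCount (· > ·) l

lemma length_le_ascNum_add_desNum_add_one [LinearOrder α] [Inhabited α] {s w : List α}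
    (h : s <+ w) (hw : w.Nodup) : s.length ≤ ascNum w + desNum s + 1 := by
  have hasc : adjCount (· < ·) s ≤ adjCount (· < ·) w := h.adjCount_le
  have hsplit := (hw.sublist h).adjCount_lt_add_adjCount_gt
  rw [ascNum_eq_adjCount, desNum_eq_adjCount]
  omega

lemma nodup_word {n : ℕ} (π : Equiv.Perm (Fin n)) : (word π).Nodup :=
  nodup_ofFn.mpr (Fin.val_injective.comp π.injective)

theorem stmt5_general (n : ℕ) (π : Equiv.Perm (Fin n)) (d : ℕ) :
    lsd (word π) d ≤ ascNum (word π) + d + 1 := by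
  refine csSup_le' ?_
  rintro _ ⟨s, hs, rfl, rfl⟩
  exact length_le_ascNum_add_desNum_add_one hs (nodup_word π)

theorem stmt5 (n : ℕ) (π : Equiv.Perm (Fin n)) (d : ℕ) (hd : d ≤ desNum (word π)) :
    lsd (word π) d ≤ ascNum (word π) + d + 1 :=
  stmt5_general n π d
end

section
/- Let π be a non-identity permutation of size n whose last descent is at position k, and let j = is(π_{[1,k]}) be the longest increasing subsequence length of the prefix π(1)⋯π(k). Then for every i with 1 ≤ i ≤ j, π has a subsequence of length at least i + n − k whose descent set is exactly {i}; that is, ls_{{i}}(π) ≥ i + n − k. -/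
open List Finset

variable {α : Type*}

/-!
After the last descent `k` the letters of `π` increase, so the suffix `π(k+1)⋯π(n)` is increasing
and starts at `π(k+1) < π(k)`. Take an increasing subsequence of length `i` of the prefix
`π(1)⋯π(k)`; if its last letter is below `π(k)`, replace that letter by `π(k)`. The last letter
now exceeds `π(k+1)`, so appending the suffix gives a subsequence of length `i + n - k` whose
only descent is at `i`.
-/

lemma List.Sublist.dropLast {l₁ l₂ : List α} (h : l₁ <+ l₂) : l₁.dropLast <+ l₂.dropLast := by
  simpa using h.reverse.tail

section Descents

variable [LinearOrder α] [Inhabited α]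

lemma mem_desSet_iff {l : List α} {d : ℕ} :
    d ∈ desSet l ↔ ∃ (_ : 1 ≤ d) (hd : d < l.length), l[d] < l[d - 1] := by
  simp only [desSet, Finset.mem_filter, Finset.mem_Icc]
  constructor
  · rintro ⟨⟨hd₁, hd₂⟩, h⟩
    refine ⟨hd₁, by omega, ?_⟩
    rwa [getD_eq_getElem _ _ (by omega), getD_eq_getElem _ _ (by omega)] at h
  · rintro ⟨hd₁, hd₂, h⟩
    refine ⟨⟨hd₁, by omega⟩, ?_⟩
    rwa [getD_eq_getElem _ _ hd₂, getD_eq_getElem _ _ (by omega)]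

lemma pairwise_lt_drop_of_forall_mem_desSet_le {l : List α} (hl : l.Nodup) {k : ℕ}
    (hk : ∀ d ∈ desSet l, d ≤ k) : (l.drop k).Pairwise (· < ·) := by
  rw [← isChain_iff_pairwise, isChain_iff_getElem]
  intro p hp
  simp only [length_drop, getElem_drop] at hp ⊢
  have hle : l[k + p] ≤ l[k + (p + 1)] := by
    by_contra! hlt
    have := hk (k + (p + 1)) (mem_desSet_iff.mpr ⟨by omega, by omega, by simpa using hlt⟩)
    omega
  refine lt_of_le_of_ne hle fun heq => ?_
  have := (hl.getElem_inj_iff).mp heq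
  omega

lemma desSet_append_of_pairwise_lt {l₁ l₂ : List α}
    (h₁ : l₁.Pairwise (· < ·)) (h₂ : l₂.Pairwise (· < ·)) (hne₁ : l₁ ≠ []) (hne₂ : l₂ ≠ [])
    (hlt : l₂.head hne₂ < l₁.getLast hne₁) :
    desSet (l₁ ++ l₂) = {l₁.length} := by
  have hlen₁ : 0 < l₁.length := length_pos_iff.mpr hne₁
  have hlen₂ : 0 < l₂.length := length_pos_iff.mpr hne₂
  ext d
  simp only [mem_desSet_iff, Finset.mem_singleton, length_append]
  constructor
  · rintro ⟨hd₁, hd₂, hdes⟩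
    by_contra hne
    rcases Nat.lt_or_gt_of_ne hne with h | h
    · rw [getElem_append_left h, getElem_append_left (by omega)] at hdes
      exact lt_asymm hdes (pairwise_iff_getElem.mp h₁ _ _ _ _ (by omega))
    · rw [getElem_append_right (by omega), getElem_append_right (by omega)] at hdes
      exact lt_asymm hdes (pairwise_iff_getElem.mp h₂ _ _ _ _ (by omega))
  · rintro rfl
    refine ⟨hlen₁, by omega, ?_⟩
    rw [getElem_append_right le_rfl, getElem_append_left (by omega)]
    simpa [head_eq_getElem, getLast_eq_getElem] using hlt

lemma length_le_lsD {w s : List α} {D : Finset ℕ} (hs : s <+ w) (hD : desSet s = D) :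
    s.length ≤ lsD w D :=
  le_csSup ⟨w.length, fun _ ⟨_, hu, _, hm⟩ => hm ▸ hu.length_le⟩ ⟨s, hs, hD, rfl⟩

end Descents

section Increasing

variable [LinearOrder α]

lemma exists_sublist_pairwise_lt_length_eq_of_le_lis {w : List α} {i : ℕ} (hi : i ≤ lis w) :
    ∃ t, t <+ w ∧ t.Pairwise (· < ·) ∧ t.length = i := by
  obtain ⟨s, hs, hsort, hlen⟩ := Nat.sSup_mem (s := {m | ∃ s : List α, s <+ w ∧
      s.Pairwise (· < ·) ∧ s.length = m}) ⟨0, [], nil_sublist _, Pairwise.nil, rfl⟩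
    ⟨w.length, fun _ ⟨_, hu, _, hm⟩ => hm ▸ hu.length_le⟩
  refine ⟨s.take i, (take_sublist _ _).trans hs, hsort.sublist (take_sublist _ _), ?_⟩
  rw [length_take, hlen]
  exact min_eq_left hi

lemma exists_sublist_concat_pairwise_lt_le_getLast {l t : List α} {x : α} (ht : t <+ l ++ [x])
    (hsort : t.Pairwise (· < ·)) (hne : t ≠ []) :
    ∃ t', t' <+ l ++ [x] ∧ t'.Pairwise (· < ·) ∧ t'.length = t.length ∧
      ∃ h : t' ≠ [], x ≤ t'.getLast h := by
  by_cases hx : x ≤ t.getLast hne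
  · exact ⟨t, ht, hsort, rfl, hne, hx⟩
  replace hx := not_le.mp hx
  have hlt : ∀ a ∈ t.dropLast, a < x := by
    rw [← dropLast_append_getLast hne, pairwise_append] at hsort
    exact fun a ha => (hsort.2.2 a ha _ (List.mem_singleton_self _)).trans hx
  refine ⟨t.dropLast ++ [x], ?_, ?_, ?_, by simp, by simp⟩
  · simpa using ht.dropLast.append (Sublist.refl [x])
  · exact pairwise_append.mpr ⟨hsort.sublist (dropLast_sublist t), pairwise_singleton _ _,
      fun a ha b hb => (List.mem_singleton.mp hb) ▸ hlt a ha⟩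
  · simp only [length_append, length_dropLast, length_singleton]
    have := length_pos_iff.mpr hne
    omega

end Increasing

lemma length_word {n : ℕ} (π : Equiv.Perm (Fin n)) : (word π).length = n := by
  simp [word]

lemma factor_one (w : List α) {k : ℕ} (hk : 1 ≤ k) : factor w 1 k = w.take k := by
  simp only [factor, Nat.sub_self, drop_zero]
  congr 1
  omega

theorem stmt11 (n : ℕ) (π : Equiv.Perm (Fin n)) (k : ℕ)
    (hk : k ∈ desSet (word π)) (hklast : ∀ k' ∈ desSet (word π), k' ≤ k)
    (i : ℕ) (hi1 : 1 ≤ i) (hij : i ≤ lis (factor (word π) 1 k)) :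
    (∃ s : List ℕ, s.Sublist (word π) ∧ desSet s = {i} ∧ i + n - k ≤ s.length) ∧
      i + n - k ≤ lsD (word π) {i} := by
  set w := word π
  have hw : w.length = n := length_word π
  obtain ⟨hk1, hkn, hdes⟩ := mem_desSet_iff.mp hk
  have hsuffix := pairwise_lt_drop_of_forall_mem_desSet_le (nodup_word π) hklast
  have hprefix : w.take k = w.take (k - 1) ++ [w[k - 1]] := by
    rw [take_concat_get']; congr 1; omega
  rw [factor_one w hk1] at hij
  obtain ⟨t, ht, htsort, htlen⟩ := exists_sublist_pairwise_lt_length_eq_of_le_lis hij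
  rw [hprefix] at ht
  obtain ⟨t', ht', ht'sort, ht'len, ht'ne, hlast⟩ :=
    exists_sublist_concat_pairwise_lt_le_getLast ht htsort (ne_nil_of_length_pos (by omega))
  have hsne : w.drop k ≠ [] := by
    simp only [ne_eq, drop_eq_nil_iff, hw, not_le]; omega
  have hsub : t' ++ w.drop k <+ w := by
    simpa [← hprefix] using ht'.append (Sublist.refl (w.drop k))
  have hdesSet : desSet (t' ++ w.drop k) = {i} := by
    rw [desSet_append_of_pairwise_lt ht'sort hsuffix ht'ne hsne (by rw [head_drop]; order),
      ht'len, htlen]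
  have hlen : i + n - k ≤ (t' ++ w.drop k).length := by
    simp only [length_append, length_drop, hw]; omega
  exact ⟨⟨_, hsub, hdesSet, hlen⟩, hlen.trans (length_le_lsD hsub hdesSet)⟩
end

section
/- Let π be a non-identity permutation of size n with last descent at position k and j = is(π_{[1,k]}). Then for every i > j, π has no subsequence whose descent set is exactly {i}; that is, ls_{{i}}(π) = 0. -/
open List Finset

variable {α : Type*}

/-!
Suppose `s` is a subsequence of `π` whose first descent is at position `i`. Since `π` increases
after its last descent `k`, the two letters of that descent of `s` cannot both lie after
position `k`; hence the run `s(1) < ⋯ < s(i)`, strictly increasing because the letters of `π`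
are distinct, lies inside `π_{[1,k]}`, and `i ≤ is(π_{[1,k]})`.
-/

section

variable [LinearOrder α]

theorem le_lis_of_sublist {s w : List α} (hs : s <+ w)
    (hinc : s.Pairwise (· < ·)) : s.length ≤ lis w :=
  le_csSup ⟨w.length, by rintro m ⟨u, hu, -, rfl⟩; exact hu.length_le⟩
    ⟨s, hs, hinc, rfl⟩

theorem lis_mono {u w : List α} (h : u <+ w) : lis u ≤ lis w :=
  csSup_le_csSup ⟨w.length, by rintro m ⟨t, ht, -, rfl⟩; exact ht.length_le⟩
    ⟨0, [], nil_sublist u, .nil, rfl⟩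
    fun _ ⟨t, ht, hinc, hlen⟩ => ⟨t, ht.trans h, hinc, hlen⟩

variable [Inhabited α]

theorem succ_mem_desSet_iff {l : List α} {d : ℕ} :
    d + 1 ∈ desSet l ↔ ∃ h : d + 1 < l.length, l[d + 1] < l[d] := by
  simp only [desSet, Finset.mem_filter, Finset.mem_Icc, Nat.add_sub_cancel]
  constructor
  · rintro ⟨⟨-, hd⟩, hlt⟩
    have h : d + 1 < l.length := by omega
    rw [getD_eq_getElem _ _ h, getD_eq_getElem _ _ (by omega)] at hlt
    exact ⟨h, hlt⟩
  · rintro ⟨h, hlt⟩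
    rw [getD_eq_getElem _ _ h, getD_eq_getElem _ _ (by omega)]
    exact ⟨⟨by omega, by omega⟩, hlt⟩

theorem pos_of_mem_desSet {l : List α} {d : ℕ} (hd : d ∈ desSet l) : 0 < d := by
  simp only [desSet, Finset.mem_filter, Finset.mem_Icc] at hd
  omega

theorem desSet_eq_empty_iff {l : List α} : desSet l = ∅ ↔ l.Pairwise (· ≤ ·) := by
  rw [← isChain_iff_pairwise, isChain_iff_getElem, Finset.eq_empty_iff_forall_notMem]
  constructor
  · intro h d hd
    by_contra! hlt
    exact h (d + 1) (succ_mem_desSet_iff.2 ⟨hd, hlt⟩)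
  · intro h d hd
    obtain ⟨d, rfl⟩ := Nat.exists_eq_add_one.2 (pos_of_mem_desSet hd)
    obtain ⟨hlen, hlt⟩ := succ_mem_desSet_iff.1 hd
    exact (h d hlen).not_gt hlt

theorem mem_desSet_take {l : List α} {m d : ℕ} :
    d ∈ desSet (l.take m) ↔ d ∈ desSet l ∧ d < m := by
  rcases d with _ | d
  · exact iff_of_false (fun h => (pos_of_mem_desSet h).false)
      (fun h => (pos_of_mem_desSet h.1).false)
  simp only [succ_mem_desSet_iff, length_take, getElem_take]
  grind

theorem add_mem_desSet_of_mem_desSet_drop {l : List α} {k d : ℕ} (hd : d ∈ desSet (l.drop k)) :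
    d + k ∈ desSet l := by
  obtain ⟨d, rfl⟩ := Nat.exists_eq_add_one.2 (pos_of_mem_desSet hd)
  obtain ⟨hlen, hlt⟩ := succ_mem_desSet_iff.1 hd
  simp only [getElem_drop, length_drop] at hlen hlt
  rw [show d + 1 + k = d + k + 1 by omega, succ_mem_desSet_iff]
  exact ⟨by omega, by simpa only [Nat.add_comm k, Nat.add_right_comm d 1 k] using hlt⟩

theorem pairwise_le_drop_of_forall_desSet_le {w : List α} {k : ℕ}
    (hk : ∀ d ∈ desSet w, d ≤ k) : (w.drop k).Pairwise (· ≤ ·) := by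
  refine desSet_eq_empty_iff.1 (Finset.eq_empty_iff_forall_notMem.2 fun d hd => ?_)
  have := hk _ (add_mem_desSet_of_mem_desSet_drop hd)
  have := pos_of_mem_desSet hd
  omega

theorem le_lis_take_of_first_descent {w s : List α} {k i : ℕ}
    (hw : w.Nodup) (hk : ∀ d ∈ desSet w, d ≤ k) (hs : s <+ w) (hi : i ∈ desSet s)
    (hfirst : ∀ d ∈ desSet s, i ≤ d) : i ≤ lis (w.take k) := by
  obtain ⟨i, rfl⟩ := Nat.exists_eq_add_one.2 (pos_of_mem_desSet hi)
  obtain ⟨hlen, hdesc⟩ := succ_mem_desSet_iff.1 hi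
  have hrun : (s.take (i + 1)).Pairwise (· < ·) := by
    have hle := desSet_eq_empty_iff.1 <| Finset.eq_empty_iff_forall_notMem.2 fun d
        (hd : d ∈ desSet (s.take (i + 1))) => by
      obtain ⟨hd, hdi⟩ := mem_desSet_take.1 hd
      exact (hfirst d hd).not_gt hdi
    exact (hle.and ((hw.sublist hs).sublist (take_sublist _ _))).imp fun h => lt_of_le_of_ne h.1 h.2
  rw [← take_append_drop k w] at hs
  obtain ⟨s₁, s₂, rfl, hs₁, hs₂⟩ := sublist_append_iff.1 hs
  -- `w` is weakly increasing after position `k`, so the descent of `s` cannot lie inside `s₂`.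
  have hlong : i + 1 ≤ s₁.length := by
    by_contra! hshort
    rw [length_append] at hlen
    rw [getElem_append_right (by omega), getElem_append_right (by omega)] at hdesc
    have hle := pairwise_iff_getElem.1 ((pairwise_le_drop_of_forall_desSet_le hk).sublist hs₂)
      (i - s₁.length) (i + 1 - s₁.length) (by omega) (by omega) (by omega)
    exact hle.not_gt hdesc
  rw [take_append_of_le_length hlong] at hrun
  simpa [hlong] using le_lis_of_sublist ((take_sublist _ _).trans hs₁) hrun

end

theorem stmt12_general (n : ℕ) (π : Equiv.Perm (Fin n)) (k : ℕ)
    (hklast : ∀ k' ∈ desSet (word π), k' ≤ k)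
    (i : ℕ) (hi : lis (factor (word π) 1 k) < i) :
    lsD (word π) {i} = 0 := by
  have hw : (word π).Nodup := List.nodup_ofFn.2 (Fin.val_injective.comp π.injective)
  have htake : (word π).take k <+ factor (word π) 1 k := by
    simpa [factor] using take_sublist_take_left (show k ≤ k - 1 + 1 by omega)
  have hempty : {m | ∃ s, s <+ word π ∧ desSet s = {i} ∧ s.length = m} = ∅ := by
    refine Set.eq_empty_of_forall_notMem ?_
    rintro m ⟨s, hs, hD, -⟩
    have hle := le_lis_take_of_first_descent hw hklast hs (hD ▸ Finset.mem_singleton_self i)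
      (by simp [hD])
    exact (hle.trans (lis_mono htake)).not_gt hi
  rw [lsD, hempty]
  exact csSup_empty

theorem stmt12 (n : ℕ) (π : Equiv.Perm (Fin n)) (k : ℕ)
    (hk : k ∈ desSet (word π)) (hklast : ∀ k' ∈ desSet (word π), k' ≤ k)
    (i : ℕ) (hi : lis (factor (word π) 1 k) < i) :
    lsD (word π) {i} = 0 :=
  stmt12_general n π k hklast i hi
end

section
/- Let π ∈ S_n and D ⊆ [n−1] with ls_D(π) ≠ 0 and D ≠ ∅. Suppose 1 ∉ D, let m = min(D) − 1, and let k be the smallest index such that is(π_{[1,k]}) = m+1. Let D' = {i − m : i ∈ D}. Then ls_D(π) = m + ls_{D'}(π_{[k,n]}). -/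
open List Finset

variable {α : Type*}

/-!
Since `min D = m + 1`, the first `m + 1` letters of a subsequence with descent set `D`
increase, so its `(m + 1)`-st letter lies at or after position `k`, and dropping its first `m`
letters leaves a subsequence of `π_{[k,n]}` with descent set `D'`.
Conversely, `k` is where the longest increasing subsequence of the prefixes first reaches
`m + 1`, so there is an increasing `v` of length `m` before position `k` with `v π_k`
increasing. A subsequence `a b ⋯` of `π_{[k,n]}` with descent set `D'` has `b < a`. If
`a ≤ π_k`, then `v π_k b ⋯` has descent set `D`; if `a > π_k`, then `a` comes after position
`k` and we use `v' π_k a b ⋯`, where `v'` is `v` without its first letter.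
-/

theorem bddAbove_sublist_lengths (w : List α) (p : List α → Prop) :
    BddAbove {m | ∃ s : List α, s.Sublist w ∧ p s ∧ s.length = m} :=
  ⟨w.length, by rintro _ ⟨s, hs, -, rfl⟩; exact hs.length_le⟩

theorem exists_sublist_take_and_sublist_drop {P r w : List α} {a : α}
    (h : (P ++ a :: r).Sublist w) :
    ∃ j, (P ++ [a]).Sublist (w.take (j + 1)) ∧ (a :: r).Sublist (w.drop j) := by
  induction w generalizing P with
  | nil => simp at h
  | cons x w ih =>
    rcases sublist_cons_iff.1 h with h | ⟨l, hl, h⟩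
    · obtain ⟨j, h₁, h₂⟩ := ih h
      exact ⟨j + 1, h₁.trans (sublist_cons_self _ _), h₂⟩
    · rcases P with _ | ⟨p, P⟩
      · obtain ⟨rfl, rfl⟩ := cons.inj hl
        exact ⟨0, by simp, h.cons_cons a⟩
      · obtain ⟨rfl, rfl⟩ := cons.inj hl
        obtain ⟨j, h₁, h₂⟩ := ih h
        exact ⟨j + 1, h₁.cons_cons p, h₂⟩

theorem factor_one_eq_take (w : List α) {j : ℕ} (hj : j ≠ 0) : factor w 1 j = w.take j := by
  simp only [factor, Nat.sub_self, drop_zero]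
  congr
  omega

theorem factor_length_eq_drop (w : List α) (k : ℕ) : factor w k w.length = w.drop (k - 1) :=
  take_of_length_le (by simp only [length_drop]; omega)

theorem Nat.exists_le_eq_of_succ_le_add_one {f : ℕ → ℕ} {c j : ℕ} (h₀ : f 0 ≤ c)
    (hf : ∀ i, f (i + 1) ≤ f i + 1) (hj : c ≤ f j) : ∃ i ≤ j, f i = c := by
  induction j with
  | zero => exact ⟨0, le_rfl, le_antisymm h₀ hj⟩
  | succ j ih =>
    by_cases hc : c ≤ f j
    · obtain ⟨i, hi, hfi⟩ := ih hc
      exact ⟨i, by omega, hfi⟩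
    · exact ⟨j + 1, le_rfl, by have := hf j; omega⟩

section IncreasingSubsequence

variable [LinearOrder α]

theorem le_lis {w s : List α} (hs : s.Sublist w) (h : s.Pairwise (· < ·)) : s.length ≤ lis w :=
  le_csSup (bddAbove_sublist_lengths w _) ⟨s, hs, h, rfl⟩

theorem exists_sublist_pairwise_length_eq_lis (w : List α) :
    ∃ s : List α, s.Sublist w ∧ s.Pairwise (· < ·) ∧ s.length = lis w := by
  refine Nat.sSup_mem ?_ (bddAbove_sublist_lengths w _)
  exact ⟨0, [], nil_sublist w, Pairwise.nil, rfl⟩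

theorem lis_nil : lis ([] : List α) = 0 := by
  obtain ⟨s, hs, -, hlen⟩ := exists_sublist_pairwise_length_eq_lis ([] : List α)
  simp_all

theorem lis_append_singleton_le (w : List α) (c : α) : lis (w ++ [c]) ≤ lis w + 1 := by
  obtain ⟨s, hs, hinc, hlen⟩ := exists_sublist_pairwise_length_eq_lis (w ++ [c])
  obtain ⟨s₁, s₂, rfl, h₁, h₂⟩ := sublist_append_iff.1 hs
  have := le_lis h₁ (pairwise_append.1 hinc).1
  have := h₂.length_le
  simp_all only [length_append, length_singleton]
  omega

theorem exists_pairwise_append_singleton_of_lis_lt {w : List α} {c : α}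
    (h : lis w < lis (w ++ [c])) :
    ∃ v : List α, v.Sublist w ∧ (v ++ [c]).Pairwise (· < ·) ∧ v.length = lis w := by
  obtain ⟨s, hs, hinc, hlen⟩ := exists_sublist_pairwise_length_eq_lis (w ++ [c])
  obtain ⟨v, s₂, rfl, hv, hs₂⟩ := sublist_append_iff.1 hs
  have hle := le_lis hv (pairwise_append.1 hinc).1
  have := lis_append_singleton_le w c
  rcases sublist_singleton.1 hs₂ with rfl | rfl
  · simp_all only [append_nil]
    omega
  · refine ⟨v, hv, hinc, ?_⟩
    simp only [length_append, length_singleton] at hlen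
    omega

theorem lis_take_succ_le (w : List α) (j : ℕ) : lis (w.take (j + 1)) ≤ lis (w.take j) + 1 := by
  rcases lt_or_ge j w.length with hj | hj
  · rw [take_add_one, getElem?_eq_getElem hj, Option.toList_some]
    exact lis_append_singleton_le _ _
  · rw [take_of_length_le hj, take_of_length_le (by omega)]
    omega

theorem isLeast_lis_take_of_factor {w : List α} {k m : ℕ} (hm : m ≠ 0)
    (hk : lis (factor w 1 k) = m + 1) (hkmin : ∀ k', lis (factor w 1 k') = m + 1 → k ≤ k') :
    IsLeast {j | m + 1 ≤ lis (w.take j)} k := by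
  have hk₀ : k ≠ 0 := by
    rintro rfl
    have := lis_take_succ_le w 0
    rw [show factor w 1 0 = w.take 1 from rfl] at hk
    simp only [zero_add, take_zero, lis_nil] at this
    omega
  refine ⟨by rw [Set.mem_ofPred_eq, ← factor_one_eq_take w hk₀, hk], fun j hj => ?_⟩
  obtain ⟨i, hij, hi⟩ := Nat.exists_le_eq_of_succ_le_add_one (f := fun i => lis (w.take i))
    (by simp [lis_nil]) (lis_take_succ_le w) hj
  have hi₀ : i ≠ 0 := by
    rintro rfl
    simp [lis_nil] at hi
  exact (hkmin i (by rwa [factor_one_eq_take w hi₀])).trans hij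

end IncreasingSubsequence

section DescentSet

variable [LinearOrder α] [Inhabited α]

theorem mem_desSet {l : List α} {i : ℕ} :
    i ∈ desSet l ↔
      (1 ≤ i ∧ i ≤ l.length - 1) ∧ l.getD i default < l.getD (i - 1) default := by
  simp [desSet, and_assoc]

theorem le_lsD {w s : List α} {D : Finset ℕ} (hs : s.Sublist w) (hD : desSet s = D) :
    s.length ≤ lsD w D :=
  le_csSup (bddAbove_sublist_lengths w _) ⟨s, hs, hD, rfl⟩

theorem exists_sublist_desSet_length_eq_lsD {w : List α} {D : Finset ℕ} (h : lsD w D ≠ 0) :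
    ∃ s : List α, s.Sublist w ∧ desSet s = D ∧ s.length = lsD w D := by
  refine Nat.sSup_mem ?_ (bddAbove_sublist_lengths w _)
  by_contra hemp
  rw [Set.not_nonempty_iff_eq_empty] at hemp
  exact h (by simp only [lsD, hemp, csSup_empty, Nat.bot_eq_zero])

theorem desSet_cons_cons (a b : α) (r : List α) :
    desSet (a :: b :: r) = (desSet (b :: r)).image (· + 1) ∪ if b < a then {1} else ∅ := by
  ext (_ | _ | j) <;> split_ifs <;> simp_all [mem_desSet]

theorem desSet_cons_cons_of_le {a b : α} (r : List α) (h : a ≤ b) :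
    desSet (a :: b :: r) = (desSet (b :: r)).image (· + 1) := by
  simp [desSet_cons_cons, not_lt.2 h]

theorem desSet_cons_cons_congr_left {a a' b : α} (r : List α) (h : b < a) (h' : b < a') :
    desSet (a' :: b :: r) = desSet (a :: b :: r) := by
  simp [desSet_cons_cons, h, h']

theorem desSet_append_cons_of_pairwise {P : List α} {c : α} (t : List α)
    (h : (P ++ [c]).Pairwise (· < ·)) :
    desSet (P ++ c :: t) = (desSet (c :: t)).image (· + P.length) := by
  induction P with
  | nil => simp
  | cons p P ih =>
    rw [cons_append, List.pairwise_cons] at h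
    obtain ⟨d, rest, hd, hpd⟩ : ∃ d rest, P ++ c :: t = d :: rest ∧ p < d := by
      cases P <;> simp_all
    rw [cons_append, hd, desSet_cons_cons_of_le _ hpd.le, ← hd, ih h.2, image_image]
    congr 1

theorem pairwise_take_of_forall_lt_desSet {s : List α} (hs : s.Nodup) {m : ℕ}
    (h : ∀ i ∈ desSet s, m < i) : (s.take (m + 1)).Pairwise (· < ·) := by
  rw [← isChain_iff_pairwise]
  induction m generalizing s with
  | zero => rcases s with _ | ⟨a, _⟩ <;> simp
  | succ m ih =>
    rcases s with _ | ⟨a, _ | ⟨b, r⟩⟩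
    · simp
    · simp
    have hab : a < b := by
      refine lt_of_le_of_ne (not_lt.1 fun hba => ?_) fun hab => ?_
      · have := h 1 (by rw [desSet_cons_cons]; simp [hba])
        omega
      · simp_all
    rw [take_succ_cons, take_succ_cons, isChain_cons_cons, ← take_succ_cons]
    refine ⟨hab, ih hs.of_cons fun i hi => ?_⟩
    have := h (i + 1) (by rw [desSet_cons_cons]; simp [hi])
    omega

theorem exists_eq_cons_cons_of_one_mem_desSet {u : List α} (h : 1 ∈ desSet u) :
    ∃ a b r, u = a :: b :: r ∧ b < a := by
  rcases u with _ | ⟨a, _ | ⟨b, r⟩⟩ <;> simp_all [mem_desSet]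

theorem exists_drop_eq_cons_pairwise {s : List α} (hs : s.Nodup) {m : ℕ} (hlen : m < s.length)
    (h : ∀ i ∈ desSet s, m < i) :
    ∃ a r, s.drop m = a :: r ∧ (s.take m ++ [a]).Pairwise (· < ·) := by
  obtain ⟨a, r, har⟩ : ∃ a r, s.drop m = a :: r := ⟨_, _, drop_eq_getElem_cons hlen⟩
  refine ⟨a, r, har, ?_⟩
  have := pairwise_take_of_forall_lt_desSet hs h
  rwa [take_add, har, take_succ_cons, take_zero] at this

theorem desSet_eq_image_desSet_drop {s : List α} (hs : s.Nodup) {m : ℕ} (hlen : m < s.length)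
    (h : ∀ i ∈ desSet s, m < i) : desSet s = (desSet (s.drop m)).image (· + m) := by
  obtain ⟨a, r, har, hinc⟩ := exists_drop_eq_cons_pairwise hs hlen h
  calc desSet s = desSet (s.take m ++ a :: r) := by rw [← har, take_append_drop]
    _ = (desSet (a :: r)).image (· + (s.take m).length) := desSet_append_cons_of_pairwise r hinc
    _ = (desSet (s.drop m)).image (· + m) := by rw [har, length_take_of_le hlen.le]

theorem exists_sublist_desSet_eq_image_add {X Y v r : List α} {a b c : α}
    (hvX : v.Sublist X) (hv : (v ++ [c]).Pairwise (· < ·)) (hv₀ : v ≠ [])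
    (hu : (a :: b :: r).Sublist (c :: Y)) (hba : b < a) :
    ∃ s : List α, s.Sublist (X ++ c :: Y) ∧
      desSet s = (desSet (a :: b :: r)).image (· + v.length) ∧
      s.length = v.length + (a :: b :: r).length := by
  rcases le_or_gt a c with hac | hca
  · refine ⟨v ++ c :: b :: r, hvX.append (hu.tail.cons_cons c), ?_, by simp⟩
    rw [desSet_append_cons_of_pairwise _ hv, desSet_cons_cons_congr_left r hba (hba.trans_le hac)]
  · have huY : (a :: b :: r).Sublist Y := by
      rcases sublist_cons_iff.1 hu with hu | ⟨l, hl, -⟩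
      · exact hu
      · exact absurd (cons.inj hl).1 hca.ne'
    have hlen : (v.tail ++ [c]).length = v.length := by
      have := length_pos_iff.2 hv₀
      simp only [length_append, length_tail, length_singleton]
      omega
    have hinc : ((v.tail ++ [c]) ++ [a]).Pairwise (· < ·) := by
      refine pairwise_append.2 ⟨hv.sublist ((tail_sublist v).append (Sublist.refl _)),
        pairwise_singleton _ _, ?_⟩
      simp only [mem_append, List.mem_singleton, forall_eq]
      rintro x (hx | rfl)
      · exact ((pairwise_append.1 hv).2.2 x ((tail_sublist v).mem hx) c
          (List.mem_singleton_self c)).trans hca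
      · exact hca
    refine ⟨(v.tail ++ [c]) ++ a :: b :: r, ?_, ?_, by simp only [length_append, hlen]⟩
    · rw [append_cons X]
      exact (((tail_sublist v).trans hvX).append (Sublist.refl [c])).append huY
    · rw [desSet_append_cons_of_pairwise _ hinc, hlen]

theorem drop_sublist_drop_of_isLeast {w : List α} {k m : ℕ}
    (hk : IsLeast {j | m + 1 ≤ lis (w.take j)} k) (hw : w.Nodup) {s : List α}
    (hs : s.Sublist w) (hlen : m < s.length) (h : ∀ i ∈ desSet s, m < i) :
    (s.drop m).Sublist (w.drop (k - 1)) := by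
  obtain ⟨a, r, har, hinc⟩ := exists_drop_eq_cons_pairwise (hs.nodup hw) hlen h
  obtain ⟨j, hj₁, hj₂⟩ := exists_sublist_take_and_sublist_drop (w := w) (P := s.take m)
    (a := a) (r := r) (by rwa [← har, take_append_drop])
  have hkj : k ≤ j + 1 := hk.2 <| by
    simpa [length_take_of_le hlen.le] using le_lis hj₁ hinc
  rw [har]
  exact hj₂.trans (drop_sublist_drop_left w (by omega))

theorem exists_sublist_desSet_eq_image_add_of_isLeast {w : List α} {k m : ℕ}
    (hk : IsLeast {j | m + 1 ≤ lis (w.take j)} k) (hm : m ≠ 0) {u : List α}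
    (hu : u.Sublist (w.drop (k - 1))) (hu₁ : 1 ∈ desSet u) :
    ∃ s : List α, s.Sublist w ∧ desSet s = (desSet u).image (· + m) ∧
      s.length = m + u.length := by
  obtain ⟨k, rfl⟩ : ∃ k', k = k' + 1 := Nat.exists_eq_succ_of_ne_zero <| by
    rintro rfl
    simpa [lis_nil] using hk.1
  rw [Nat.add_sub_cancel] at hu
  have hprev : lis (w.take k) ≤ m := by
    by_contra! hlt
    have := hk.2 hlt
    omega
  have hkw : k < w.length := by
    by_contra! hge
    have := hk.1
    rw [Set.mem_ofPred_eq, take_of_length_le (by omega)] at this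
    rw [take_of_length_le hge] at hprev
    omega
  have hlis : lis (w.take k) = m := by
    have := lis_take_succ_le w k
    have := hk.1
    rw [Set.mem_ofPred_eq] at this
    omega
  obtain ⟨v, hvX, hv, hvlen⟩ := exists_pairwise_append_singleton_of_lis_lt (w := w.take k)
    (c := w[k]) (by rw [← take_succ_eq_append_getElem hkw, hlis]; exact hk.1)
  rw [hlis] at hvlen
  obtain ⟨a, b, r, rfl, hba⟩ := exists_eq_cons_cons_of_one_mem_desSet hu₁
  rw [drop_eq_getElem_cons hkw] at hu
  obtain ⟨s, hs, hsD, hslen⟩ := exists_sublist_desSet_eq_image_add hvX hv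
    (ne_nil_of_length_pos (by omega)) hu hba
  rw [hvlen] at hsD hslen
  refine ⟨s, ?_, hsD, hslen⟩
  rwa [← take_append_drop k w, drop_eq_getElem_cons hkw]

end DescentSet

theorem stmt16_general (n : ℕ) (π : Equiv.Perm (Fin n)) (D : Finset ℕ)
    (hDne : D.Nonempty) (h0 : lsD (word π) D ≠ 0)
    (h1 : 1 ∉ D) (m : ℕ) (hm : m + 1 = D.min' hDne)
    (k : ℕ) (hk : lis (factor (word π) 1 k) = m + 1)
    (hkmin : ∀ k' : ℕ, lis (factor (word π) 1 k') = m + 1 → k ≤ k') :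
    lsD (word π) D = m + lsD (factor (word π) k n) (D.image (fun i => i - m)) := by
  set w := word π
  have hw : w.Nodup := nodup_ofFn.2 fun i j h => π.injective (Fin.val_injective h)
  have hD : ∀ d ∈ D, m < d := fun d hd => hm.trans_le (D.min'_le d hd)
  have hmD : m + 1 ∈ D := hm ▸ D.min'_mem hDne
  have hm0 : m ≠ 0 := by rintro rfl; exact h1 hmD
  have hkl := isLeast_lis_take_of_factor hm0 hk hkmin
  rw [← show w.length = n from length_ofFn, factor_length_eq_drop]
  obtain ⟨s, hs, rfl, hslen⟩ := exists_sublist_desSet_length_eq_lsD h0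
  have hms : m + 1 < s.length := by have := (mem_desSet.1 hmD).1; omega
  have hsm := desSet_eq_image_desSet_drop (hs.nodup hw) (by omega) hD
  have htD : desSet (s.drop m) = (desSet s).image (· - m) := by
    simp [hsm, image_image, Function.comp_def]
  have hle := le_lsD (drop_sublist_drop_of_isLeast hkl hw hs (by omega) hD) htD
  rw [length_drop] at hle
  obtain ⟨u, hu, huD, hulen⟩ :=
    exists_sublist_desSet_length_eq_lsD (w := w.drop (k - 1)) (D := (desSet s).image (· - m))
      (by omega)
  obtain ⟨s', hs', hs'D, hs'len⟩ := exists_sublist_desSet_eq_image_add_of_isLeast hkl hm0 hu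
    (by rw [huD]; exact mem_image.2 ⟨m + 1, hmD, by simp⟩)
  have hge := le_lsD hs' (by rw [hs'D, huD, ← htD, ← hsm])
  omega

theorem stmt16 (n : ℕ) (π : Equiv.Perm (Fin n)) (D : Finset ℕ)
    (hDsub : D ⊆ Finset.Icc 1 (n - 1)) (hDne : D.Nonempty) (h0 : lsD (word π) D ≠ 0)
    (h1 : 1 ∉ D) (m : ℕ) (hm : m + 1 = D.min' hDne)
    (k : ℕ) (hk : lis (factor (word π) 1 k) = m + 1)
    (hkmin : ∀ k' : ℕ, lis (factor (word π) 1 k') = m + 1 → k ≤ k') :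
    lsD (word π) D = m + lsD (factor (word π) k n) (D.image (fun i => i - m)) :=
  stmt16_general n π D hDne h0 h1 m hm k hk hkmin
end

section
/- Fix a partition λ of n. The number of standard Young tableaux Q of shape λ satisfying des(Q) + λ₁ = n equals the number of fillings of the Young diagram of λ with entries from [λ₁] that strictly increase along rows and weakly increase down columns (i.e., the number of semistandard Young tableaux of the conjugate shape λ' with entries in [λ₁]). -/
open Finset

/-- A semistandard Young tableau of shape `μ` is *standard* if its entries give a bijection
between the cells of `μ` and `{1, …, μ.card}`.  (Since the entries are then distinct, the
rows are automatically strictly increasing.) -/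
def IsSYT {μ : YoungDiagram} (T : SemistandardYoungTableau μ) : Prop :=
  Set.BijOn (fun c : ℕ × ℕ => T c.1 c.2) ↑μ.cells ↑(Finset.Icc 1 μ.card)

/-- The descent set of a standard Young tableau: the set of entries `i` such that `i + 1`
lies in a strictly lower row than `i`. -/
def sytDesSet {μ : YoungDiagram} (T : SemistandardYoungTableau μ) : Set ℕ :=
  {i | ∃ c₁ ∈ μ.cells, ∃ c₂ ∈ μ.cells, T c₁.1 c₁.2 = i ∧ T c₂.1 c₂.2 = i + 1 ∧ c₁.1 < c₂.1}

/-!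
In a standard Young tableau `T` of shape `λ ⊢ n`, no `u` with `u + 1` in the first row is a
descent, so `des T ≤ n - λ₁`, with equality iff every other `u < n` is a descent. For such `T`,
`f c := #{first-row entries ≤ T c}` strictly increases along rows: two entries of one row with
no first-row entry between them would be joined by a chain of descents, hence lie in different
rows. Conversely, a filling `f` is standardized by numbering its cells in the lexicographic order
of (value, row). The first row of `f` is `1, …, λ₁`, so the cell just before a cell of value `w`
outside the first row also has value `w` and lies in a higher row: every `u` with `u + 1` outside
the first row is a descent. The two constructions are mutually inverse.
-/

namespace Finset

variable {β α α' : Type*} [LinearOrder α] [LinearOrder α']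

def rankBy (s : Finset β) (g : β → α) (x : β) : ℕ := #{y ∈ s | g y ≤ g x}

variable {s : Finset β} {g : β → α} {x y : β}

lemma rankBy_le_rankBy (h : g x ≤ g y) : s.rankBy g x ≤ s.rankBy g y :=
  card_le_card <| monotone_filter_right s fun _ _ hz => hz.trans h

lemma rankBy_lt_rankBy (hy : y ∈ s) (h : g x < g y) : s.rankBy g x < s.rankBy g y := by
  refine card_lt_card ⟨monotone_filter_right s fun _ _ hz => hz.trans h.le, fun hsub => ?_⟩
  exact h.not_ge (mem_filter.mp (hsub (mem_filter.mpr ⟨hy, le_rfl⟩))).2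

lemma rankBy_le_rankBy_iff (hx : x ∈ s) : s.rankBy g x ≤ s.rankBy g y ↔ g x ≤ g y :=
  ⟨fun h => not_lt.mp fun hlt => (rankBy_lt_rankBy hx hlt).not_ge h, rankBy_le_rankBy⟩

lemma rankBy_lt_rankBy_iff (hy : y ∈ s) : s.rankBy g x < s.rankBy g y ↔ g x < g y := by
  simpa only [not_le] using (rankBy_le_rankBy_iff hy (g := g) (x := y) (y := x)).not

lemma rankBy_mem_Icc (hx : x ∈ s) : s.rankBy g x ∈ Icc 1 #s :=
  mem_Icc.mpr ⟨card_pos.mpr ⟨x, mem_filter.mpr ⟨hx, le_rfl⟩⟩, card_filter_le _ _⟩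

lemma bijOn_rankBy (hg : Set.InjOn g s) : Set.BijOn (s.rankBy g) s (Icc 1 #s) := by
  have hmaps : Set.MapsTo (s.rankBy g) s (Icc 1 #s) := fun _ hx => rankBy_mem_Icc hx
  have hinj : Set.InjOn (s.rankBy g) s := fun x hx y hy h =>
    hg hx hy (le_antisymm ((rankBy_le_rankBy_iff hx).mp h.le) ((rankBy_le_rankBy_iff hy).mp h.ge))
  exact ⟨hmaps, hinj, surjOn_of_injOn_of_card_le _ hmaps hinj (by simp)⟩

lemma rankBy_congr {g' : β → α'} (hg : Set.InjOn g s)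
    (h : ∀ x ∈ s, ∀ y ∈ s, g x < g y → g' x < g' y) (hx : x ∈ s) :
    s.rankBy g' x = s.rankBy g x := by
  refine congrArg card <| filter_congr fun y hy =>
    ⟨fun hle => not_lt.mp fun hlt => ?_, fun hle => ?_⟩
  · exact (h x hx y hy hlt).not_ge hle
  · rcases hle.lt_or_eq with hlt | heq
    · exact (h y hy x hx hlt).le
    · rw [hg hy hx heq]

lemma rankBy_eq_of_bijOn {g : β → ℕ} (hg : Set.BijOn g s (Icc 1 #s)) (hx : x ∈ s) :
    s.rankBy g x = g x := by
  have hgx := mem_Icc.mp (hg.mapsTo hx)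
  suffices #{y ∈ s | g y ≤ g x} = #(Icc 1 (g x)) by rw [rankBy, this, Nat.card_Icc]; omega
  refine card_nbij g (fun y hy => ?_) (hg.injOn.mono fun y hy => (mem_filter.mp hy).1)
    (fun v hv => ?_)
  · exact mem_Icc.mpr ⟨(mem_Icc.mp (hg.mapsTo (mem_filter.mp hy).1)).1, (mem_filter.mp hy).2⟩
  · have hv' := mem_Icc.mp hv
    obtain ⟨y, hy, rfl⟩ :=
      hg.surjOn (mem_Icc.mpr ⟨hv'.1, hv'.2.trans hgx.2⟩ : v ∈ (Icc 1 #s : Set ℕ))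
    exact ⟨y, mem_filter.mpr ⟨hy, hv'.2⟩, rfl⟩

lemma card_filter_range_succ_notMem_add_card {E : Finset ℕ} {n : ℕ} (hE : E ⊆ Icc 1 n) :
    #{u ∈ range n | u + 1 ∉ E} + #E = n := by
  have hshift : #{u ∈ range n | u + 1 ∈ E} = #E := by
    refine card_nbij' (· + 1) (· - 1) (fun u hu => (mem_filter.mp hu).2) (fun v hv => ?_)
      (fun u _ => by simp) (fun v hv => ?_)
    · have := mem_Icc.mp (hE hv)
      simp only [coe_filter, mem_range, Set.mem_ofPred_eq]
      exact ⟨by omega, by rwa [Nat.sub_add_cancel this.1]⟩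
    · have := mem_Icc.mp (hE hv)
      dsimp only
      omega
  rw [← hshift, add_comm, card_filter_add_card_filter_not, card_range]

end Finset

section

open YoungDiagram

variable {μ : YoungDiagram}

def firstRowEntries (T : SemistandardYoungTableau μ) : Finset ℕ :=
  (range (μ.rowLen 0)).image (T 0)

def IsDescentMaximal (T : SemistandardYoungTableau μ) : Prop :=
  ∀ u, u + 1 ≤ μ.card → u + 1 ∉ firstRowEntries T → u ∈ sytDesSet T

namespace IsSYT

variable {T : SemistandardYoungTableau μ} (hT : IsSYT T)
include hT

lemma entry_mem_Icc {c : ℕ × ℕ} (hc : c ∈ μ.cells) : T c.1 c.2 ∈ Icc 1 μ.card :=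
  hT.mapsTo hc

lemma eq_of_entry_eq {c c' : ℕ × ℕ} (hc : c ∈ μ.cells) (hc' : c' ∈ μ.cells)
    (h : T c.1 c.2 = T c'.1 c'.2) : c = c' :=
  hT.injOn hc hc' h

lemma row_strict {i j₁ j₂ : ℕ} (hj : j₁ < j₂) (hcell : (i, j₂) ∈ μ) : T i j₁ < T i j₂ := by
  refine (T.row_weak hj hcell).lt_of_ne fun h => hj.ne ?_
  exact congrArg Prod.snd (hT.eq_of_entry_eq (μ.up_left_mem le_rfl hj.le hcell) hcell h)

lemma row_lt_of_forall_mem_sytDesSet {c : ℕ × ℕ} (hc : c ∈ μ.cells) {b : ℕ}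
    (hb : T c.1 c.2 < b) (hdes : ∀ u, T c.1 c.2 ≤ u → u < b → u ∈ sytDesSet T)
    {c' : ℕ × ℕ} (hc' : c' ∈ μ.cells) (hc'b : T c'.1 c'.2 = b) : c.1 < c'.1 := by
  induction b, hb using Nat.le_induction generalizing c' with
  | base =>
    obtain ⟨d₁, hd₁, d₂, hd₂, h₁, h₂, hrow⟩ := hdes _ le_rfl (Nat.lt_succ_self _)
    rwa [hT.eq_of_entry_eq hc hd₁ h₁.symm, hT.eq_of_entry_eq hc' hd₂ (hc'b.trans h₂.symm)]
  | succ b hb ih =>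
    obtain ⟨d₁, hd₁, d₂, hd₂, h₁, h₂, hrow⟩ := hdes b (by omega) (Nat.lt_succ_self b)
    have := ih (fun u hu hub => hdes u hu (by omega)) hd₁ h₁
    rw [hT.eq_of_entry_eq hc' hd₂ (hc'b.trans h₂.symm)]
    omega

lemma card_firstRowEntries : #(firstRowEntries T) = μ.rowLen 0 := by
  refine (card_image_of_injOn fun j hj j' hj' h => ?_).trans (card_range _)
  exact congrArg Prod.snd (hT.eq_of_entry_eq (mem_iff_lt_rowLen.mpr (mem_range.mp hj))
    (mem_iff_lt_rowLen.mpr (mem_range.mp hj')) h)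

lemma firstRowEntries_subset : firstRowEntries T ⊆ Icc 1 μ.card := by
  simp only [firstRowEntries, image_subset_iff, mem_range]
  exact fun j hj => hT.entry_mem_Icc (c := (0, j)) (mem_iff_lt_rowLen.mpr hj)

lemma sytDesSet_subset :
    sytDesSet T ⊆ ↑{u ∈ range μ.card | u + 1 ∉ firstRowEntries T} := by
  rintro u ⟨c₁, hc₁, c₂, hc₂, -, h₂, hrow⟩
  have hu := mem_Icc.mp (hT.entry_mem_Icc hc₂)
  simp only [coe_filter, mem_range, Set.mem_ofPred_eq, firstRowEntries, mem_image]
  refine ⟨by omega, fun ⟨j, hj, hju⟩ => ?_⟩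
  have := hT.eq_of_entry_eq (c := (0, j)) (mem_iff_lt_rowLen.mpr hj) hc₂
    (hju.trans h₂.symm)
  rw [← this] at hrow
  exact Nat.not_lt_zero _ hrow

lemma card_sytDesSet_add_rowLen_eq_iff :
    Nat.card (sytDesSet T) + μ.rowLen 0 = μ.card ↔ IsDescentMaximal T := by
  have hB := card_filter_range_succ_notMem_add_card hT.firstRowEntries_subset
  rw [hT.card_firstRowEntries] at hB
  rw [Nat.card_coe_set_eq]
  constructor
  · intro h u hu hE
    rw [Set.eq_of_subset_of_ncard_le hT.sytDesSet_subset (by rw [Set.ncard_coe_finset]; omega)]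
    simp only [coe_filter, mem_range, Set.mem_ofPred_eq]
    exact ⟨hu, hE⟩
  · intro h
    have : ↑{u ∈ range μ.card | u + 1 ∉ firstRowEntries T} ⊆ sytDesSet T := fun u hu => by
      simp only [coe_filter, mem_range, Set.mem_ofPred_eq] at hu
      exact h u hu.1 hu.2
    rw [hT.sytDesSet_subset.antisymm this, Set.ncard_coe_finset]
    omega

end IsSYT

def IsRowStrictFilling (μ : YoungDiagram) (f : ℕ → ℕ → ℕ) : Prop :=
  (∀ i j : ℕ, (i, j) ∉ μ → f i j = 0) ∧
  (∀ i j1 j2 : ℕ, j1 < j2 → (i, j2) ∈ μ → f i j1 < f i j2) ∧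
  (∀ i1 i2 j : ℕ, i1 < i2 → (i2, j) ∈ μ → f i1 j ≤ f i2 j) ∧
  (∀ i j : ℕ, (i, j) ∈ μ → 1 ≤ f i j ∧ f i j ≤ μ.rowLen 0)

namespace IsRowStrictFilling

variable {f : ℕ → ℕ → ℕ} (hf : IsRowStrictFilling μ f)
include hf

lemma add_sub_le_apply_zero {j j' : ℕ} (hjj' : j ≤ j') (hj' : j' < μ.rowLen 0) :
    f 0 j + (j' - j) ≤ f 0 j' := by
  induction j', hjj' using Nat.le_induction with
  | base => simp
  | succ j' hjj' ih =>
    have := hf.2.1 0 j' (j' + 1) (Nat.lt_succ_self _) (mem_iff_lt_rowLen.mpr hj')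
    have := ih (by omega)
    omega

lemma apply_zero {j : ℕ} (hj : j < μ.rowLen 0) : f 0 j = j + 1 := by
  have hlow := hf.add_sub_le_apply_zero (Nat.zero_le j) hj
  have hup := hf.add_sub_le_apply_zero (j := j) (j' := μ.rowLen 0 - 1) (by omega) (by omega)
  have h₀ := hf.2.2.2 0 0 (mem_iff_lt_rowLen.mpr (by omega))
  have h₁ := hf.2.2.2 0 (μ.rowLen 0 - 1) (mem_iff_lt_rowLen.mpr (by omega))
  omega

end IsRowStrictFilling

def standardizeKey (f : ℕ → ℕ → ℕ) (c : ℕ × ℕ) : ℕ ×ₗ ℕ := toLex (f c.1 c.2, c.1)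

lemma injOn_standardizeKey {f : ℕ → ℕ → ℕ}
    (hrow : ∀ i j1 j2 : ℕ, j1 < j2 → (i, j2) ∈ μ → f i j1 < f i j2) :
    Set.InjOn (standardizeKey f) μ.cells := by
  rintro ⟨i, j⟩ hc ⟨i', j'⟩ hc' h
  obtain ⟨hval, rfl⟩ := Prod.ext_iff.mp (toLex.injective h)
  rcases lt_trichotomy j j' with hlt | rfl | hgt
  · exact absurd hval (hrow i j j' hlt hc').ne
  · rfl
  · exact absurd hval (hrow i j' j hgt hc).ne'

def standardize (f : ℕ → ℕ → ℕ) (hf : IsRowStrictFilling μ f) : SemistandardYoungTableau μ where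
  entry i j := if (i, j) ∈ μ then μ.cells.rankBy (standardizeKey f) (i, j) else 0
  row_weak' {i j₁ j₂} hj hcell := by
    rw [if_pos (μ.up_left_mem le_rfl hj.le hcell), if_pos hcell]
    exact rankBy_le_rankBy (Prod.Lex.toLex_le_toLex.mpr (Or.inl (hf.2.1 i j₁ j₂ hj hcell)))
  col_strict' {i₁ i₂ j} hi hcell := by
    rw [if_pos (μ.up_left_mem hi.le le_rfl hcell), if_pos hcell]
    refine rankBy_lt_rankBy hcell (Prod.Lex.toLex_lt_toLex.mpr ?_)
    exact (hf.2.2.1 i₁ i₂ j hi hcell).lt_or_eq.imp_right (⟨·, hi⟩)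
  zeros' h := if_neg h

section standardize

variable {f : ℕ → ℕ → ℕ} (hf : IsRowStrictFilling μ f)

lemma standardize_apply {c : ℕ × ℕ} (hc : c ∈ μ.cells) :
    standardize f hf c.1 c.2 = μ.cells.rankBy (standardizeKey f) c :=
  if_pos hc

lemma isSYT_standardize : IsSYT (standardize f hf) :=
  (bijOn_rankBy (injOn_standardizeKey hf.2.1)).congr fun _ hc => (standardize_apply hf hc).symm

lemma standardize_le_standardize_iff {c c' : ℕ × ℕ} (hc : c ∈ μ.cells) (hc' : c' ∈ μ.cells) :
    standardize f hf c.1 c.2 ≤ standardize f hf c'.1 c'.2 ↔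
      standardizeKey f c ≤ standardizeKey f c' := by
  rw [standardize_apply hf hc, standardize_apply hf hc', rankBy_le_rankBy_iff hc]

lemma standardize_lt_standardize_iff {c c' : ℕ × ℕ} (hc : c ∈ μ.cells) (hc' : c' ∈ μ.cells) :
    standardize f hf c.1 c.2 < standardize f hf c'.1 c'.2 ↔
      standardizeKey f c < standardizeKey f c' := by
  rw [standardize_apply hf hc, standardize_apply hf hc', rankBy_lt_rankBy_iff hc']

lemma isDescentMaximal_standardize : IsDescentMaximal (standardize f hf) := by
  have hT := isSYT_standardize hf
  intro u hu hE
  obtain ⟨c, hc, hcu⟩ : ∃ c ∈ μ.cells, standardize f hf c.1 c.2 = u + 1 :=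
    hT.surjOn (mem_Icc.mpr ⟨by omega, hu⟩)
  have hrow : c.1 ≠ 0 := fun h => hE <| mem_image.mpr
    ⟨c.2, mem_range.mpr (mem_iff_lt_rowLen.mp (h ▸ hc)), h ▸ hcu⟩
  have hw := hf.2.2.2 c.1 c.2 hc
  have hc₀ : (0, f c.1 c.2 - 1) ∈ μ := mem_iff_lt_rowLen.mpr (by omega)
  have hkey₀ : standardizeKey f (0, f c.1 c.2 - 1) = toLex (f c.1 c.2, 0) := by
    rw [standardizeKey, hf.apply_zero (by omega), Nat.sub_add_cancel hw.1]
  have hlt₀ : standardize f hf 0 (f c.1 c.2 - 1) < u + 1 := by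
    rw [← hcu]
    refine (standardize_lt_standardize_iff hf hc₀ hc).mpr ?_
    rw [hkey₀, standardizeKey, Prod.Lex.toLex_lt_toLex]
    exact Or.inr ⟨rfl, Nat.pos_of_ne_zero hrow⟩
  have hpos₀ : 1 ≤ standardize f hf 0 (f c.1 c.2 - 1) := (mem_Icc.mp (hT.entry_mem_Icc hc₀)).1
  obtain ⟨d, hd, hdu⟩ : ∃ d ∈ μ.cells, standardize f hf d.1 d.2 = u :=
    hT.surjOn (mem_Icc.mpr ⟨by omega, by omega⟩)
  have h₁ := (standardize_le_standardize_iff hf hc₀ hd).mp (by dsimp only; omega)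
  have h₂ := (standardize_lt_standardize_iff hf hd hc).mp (by omega)
  rw [hkey₀, standardizeKey, Prod.Lex.toLex_le_toLex] at h₁
  rw [standardizeKey, standardizeKey, Prod.Lex.toLex_lt_toLex] at h₂
  refine ⟨d, hd, c, hc, hdu, hcu, ?_⟩
  dsimp only at h₁ h₂
  omega

end standardize

def firstRowCount (T : SemistandardYoungTableau μ) (i j : ℕ) : ℕ :=
  if (i, j) ∈ μ then #{j' ∈ range (μ.rowLen 0) | T 0 j' ≤ T i j} else 0

lemma firstRowCount_apply (T : SemistandardYoungTableau μ) {c : ℕ × ℕ} (hc : c ∈ μ.cells) :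
    firstRowCount T c.1 c.2 = #{j ∈ range (μ.rowLen 0) | T 0 j ≤ T c.1 c.2} :=
  if_pos hc

lemma firstRowCount_standardize {f : ℕ → ℕ → ℕ} (hf : IsRowStrictFilling μ f) :
    firstRowCount (standardize f hf) = f := by
  funext i j
  by_cases hc : (i, j) ∈ μ
  · have hw := hf.2.2.2 i j hc
    rw [firstRowCount_apply _ (c := (i, j)) hc]
    calc #{j' ∈ range (μ.rowLen 0) | standardize f hf 0 j' ≤ standardize f hf i j}
        = #(range (f i j)) := by
          congr 1
          ext j'
          simp only [mem_filter, mem_range]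
          refine ⟨fun ⟨hj', hle⟩ => ?_, fun hj' => ⟨by omega, ?_⟩⟩
          · have := (standardize_le_standardize_iff hf (c := (0, j')) (c' := (i, j))
              (mem_iff_lt_rowLen.mpr hj') hc).mp hle
            rw [standardizeKey, standardizeKey, Prod.Lex.toLex_le_toLex, hf.apply_zero hj'] at this
            simp only at this
            omega
          · refine (standardize_le_standardize_iff hf (c := (0, j')) (c' := (i, j))
              (mem_iff_lt_rowLen.mpr (by omega)) hc).mpr ?_
            rw [standardizeKey, standardizeKey, Prod.Lex.toLex_le_toLex, hf.apply_zero (by omega)]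
            simp only
            omega
      _ = f i j := card_range _
  · rw [firstRowCount, if_neg hc, hf.1 i j hc]

namespace IsSYT

variable {T : SemistandardYoungTableau μ} (hT : IsSYT T)
include hT

lemma standardizeKey_firstRowCount_lt (hmax : IsDescentMaximal T) {c c' : ℕ × ℕ}
    (hc : c ∈ μ.cells) (hc' : c' ∈ μ.cells) (h : T c.1 c.2 < T c'.1 c'.2) :
    standardizeKey (firstRowCount T) c < standardizeKey (firstRowCount T) c' := by
  rw [standardizeKey, standardizeKey, Prod.Lex.toLex_lt_toLex, firstRowCount_apply T hc,
    firstRowCount_apply T hc']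
  dsimp only
  by_cases hbetween : ∃ j < μ.rowLen 0, T c.1 c.2 < T 0 j ∧ T 0 j ≤ T c'.1 c'.2
  · obtain ⟨j, hj, hcj, hjc'⟩ := hbetween
    refine Or.inl (card_lt_card ⟨monotone_filter_right _ fun _ _ h' => h'.trans h.le,
      fun hsub => ?_⟩)
    exact hcj.not_ge (mem_filter.mp (hsub (mem_filter.mpr ⟨mem_range.mpr hj, hjc'⟩))).2
  · push Not at hbetween
    refine Or.inr ⟨congrArg card (filter_congr fun j hj => ⟨fun h' => h'.trans h.le,
      fun h' => not_lt.mp fun hlt => (hbetween j (mem_range.mp hj) hlt).not_ge h'⟩), ?_⟩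
    refine hT.row_lt_of_forall_mem_sytDesSet hc h (fun u hu hu' => ?_) hc' rfl
    refine hmax u ((mem_Icc.mp (hT.entry_mem_Icc hc')).2.trans' hu') fun hE => ?_
    obtain ⟨j, hj, hju⟩ := mem_image.mp hE
    exact (hbetween j (mem_range.mp hj) (by omega)).not_ge (by omega)

lemma isRowStrictFilling_firstRowCount (hmax : IsDescentMaximal T) :
    IsRowStrictFilling μ (firstRowCount T) := by
  refine ⟨fun i j hc => if_neg hc, fun i j₁ j₂ hj hcell => ?_, fun i₁ i₂ j hi hcell => ?_,
    fun i j hcell => ?_⟩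
  · have := hT.standardizeKey_firstRowCount_lt hmax (c := (i, j₁)) (c' := (i, j₂))
      (μ.up_left_mem le_rfl hj.le hcell) hcell (hT.row_strict hj hcell)
    rw [standardizeKey, standardizeKey, Prod.Lex.toLex_lt_toLex] at this
    simpa using this
  · rw [firstRowCount_apply T (c := (i₁, j)) (μ.up_left_mem hi.le le_rfl hcell),
      firstRowCount_apply T (c := (i₂, j)) hcell]
    exact card_le_card (monotone_filter_right _ fun _ _ h' => h'.trans (T.col_strict hi hcell).le)
  · have hrow₀ : (0, j) ∈ μ := μ.up_left_mem (Nat.zero_le i) le_rfl hcell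
    rw [firstRowCount_apply T (c := (i, j)) hcell]
    refine ⟨card_pos.mpr ⟨0, mem_filter.mpr ⟨mem_range.mpr ?_, ?_⟩⟩,
      (card_filter_le _ _).trans (card_range _).le⟩
    · exact mem_iff_lt_rowLen.mp (μ.up_left_mem le_rfl (Nat.zero_le j) hrow₀)
    · exact (T.row_weak_of_le (Nat.zero_le j) hrow₀).trans (T.col_weak (Nat.zero_le i) hcell)

lemma standardize_firstRowCount (hmax : IsDescentMaximal T) :
    standardize (firstRowCount T) (hT.isRowStrictFilling_firstRowCount hmax) = T := by
  refine SemistandardYoungTableau.ext fun i j => ?_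
  by_cases hc : (i, j) ∈ μ
  · rw [standardize_apply _ (c := (i, j)) hc]
    refine (rankBy_congr hT.injOn (fun c hc c' hc' h => ?_) hc).trans (rankBy_eq_of_bijOn hT hc)
    exact hT.standardizeKey_firstRowCount_lt hmax hc hc' h
  · rw [SemistandardYoungTableau.zeros _ hc, T.zeros hc]

end IsSYT

def standardizeEquiv (μ : YoungDiagram) :
    {f // IsRowStrictFilling μ f} ≃
      {T : SemistandardYoungTableau μ // IsSYT T ∧ IsDescentMaximal T} where
  toFun f := ⟨standardize f.1 f.2, isSYT_standardize f.2, isDescentMaximal_standardize f.2⟩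
  invFun T := ⟨firstRowCount T.1, T.2.1.isRowStrictFilling_firstRowCount T.2.2⟩
  left_inv f := Subtype.ext (firstRowCount_standardize f.2)
  right_inv T := Subtype.ext (T.2.1.standardize_firstRowCount T.2.2)

end

theorem stmt18 (μ : YoungDiagram) :
    Nat.card {T : SemistandardYoungTableau μ //
        IsSYT T ∧ Nat.card (sytDesSet T) + μ.rowLen 0 = μ.card} =
      Nat.card {f : ℕ → ℕ → ℕ //
        (∀ i j : ℕ, (i, j) ∉ μ → f i j = 0) ∧
        (∀ i j1 j2 : ℕ, j1 < j2 → (i, j2) ∈ μ → f i j1 < f i j2) ∧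
        (∀ i1 i2 j : ℕ, i1 < i2 → (i2, j) ∈ μ → f i1 j ≤ f i2 j) ∧
        (∀ i j : ℕ, (i, j) ∈ μ → 1 ≤ f i j ∧ f i j ≤ μ.rowLen 0)} :=
  Nat.card_congr <| (Equiv.subtypeEquivRight fun _ =>
    and_congr_right fun hT => hT.card_sytDesSet_add_rowLen_eq_iff).trans
      (standardizeEquiv μ).symm
end
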